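/- Let s be a positive integer, Q : Fin m → ℤ, q : Fin n → ℤ, and suppose there exist weights n_y : Fin m → ℚ and n_x : Fin n → ℚ and a degree s' ≠ 0 such that ∑_j n_y j * M j i = s' for all i, ∑_b n_x b * N b a = s' for all a, and ∑_j n_y j - ∑_b n_x b = s', where M : Fin m → Fin m → ℤ and N : Fin n → Fin n → ℤ satisfy ∑_i M j i * Q i = s for all j and ∑_a N b a * q a = s for all b. Then ∑_i Q i - ∑_a q a = s. -/

import Mathlib

/-! Pairing the weight equations with the degree equations of the monomials gives
`s' · ∑ Q = s · ∑ n_y` and `s' · ∑ q = s · ∑ n_x`; subtracting and using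
`∑ n_y - ∑ n_x = s'` yields `s' · (∑ Q - ∑ q) = s' · s`, and `s' ≠ 0` cancels. -/

theorem mul_sum_eq_mul_sum_of_sum_mul_eq {R ι κ : Type*} [CommSemiring R]
    [Fintype ι] [Fintype κ] {M : κ → ι → R} {v : κ → R} {w : ι → R} {a b : R}
    (hv : ∀ i, ∑ j, v j * M j i = a) (hw : ∀ j, ∑ i, M j i * w i = b) :
    a * ∑ i, w i = b * ∑ j, v j :=
  calc a * ∑ i, w i = ∑ i, (∑ j, v j * M j i) * w i := by simp only [hv, Finset.mul_sum]
    _ = ∑ j, v j * ∑ i, M j i * w i := by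
      simp only [Finset.sum_mul, Finset.mul_sum, mul_assoc]
      exact Finset.sum_comm
    _ = b * ∑ j, v j := by simp only [hw, Finset.mul_sum, mul_comm]

theorem stmt0_general (m n : ℕ) (s : ℤ)
    (Q : Fin m → ℤ) (q : Fin n → ℤ)
    (M : Fin m → Fin m → ℤ) (N : Fin n → Fin n → ℤ)
    (hM : ∀ j, ∑ i, M j i * Q i = s)
    (hN : ∀ b, ∑ a, N b a * q a = s)
    (ny : Fin m → ℚ) (nx : Fin n → ℚ) (s' : ℚ) (hs' : s' ≠ 0)
    (h1 : ∀ i, ∑ j, ny j * (M j i : ℚ) = s')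
    (h2 : ∀ a, ∑ b, nx b * (N b a : ℚ) = s')
    (h3 : ∑ j, ny j - ∑ b, nx b = s') :
    ∑ i, Q i - ∑ a, q a = s := by
  have hQ : s' * ∑ i, (Q i : ℚ) = s * ∑ j, ny j :=
    mul_sum_eq_mul_sum_of_sum_mul_eq h1 fun j => by exact_mod_cast hM j
  have hq : s' * ∑ a, (q a : ℚ) = s * ∑ b, nx b :=
    mul_sum_eq_mul_sum_of_sum_mul_eq h2 fun b => by exact_mod_cast hN b
  have key : ((∑ i, Q i - ∑ a, q a : ℤ) : ℚ) = s := by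
    apply mul_left_cancel₀ hs'
    push_cast
    rw [mul_sub, hQ, hq, ← mul_sub, h3, mul_comm]
  exact_mod_cast key

theorem stmt0 (m n : ℕ) (s : ℤ) (hs : 0 < s)
    (Q : Fin m → ℤ) (q : Fin n → ℤ)
    (M : Fin m → Fin m → ℤ) (N : Fin n → Fin n → ℤ)
    (hM : ∀ j, ∑ i, M j i * Q i = s)
    (hN : ∀ b, ∑ a, N b a * q a = s)
    (ny : Fin m → ℚ) (nx : Fin n → ℚ) (s' : ℚ) (hs' : s' ≠ 0)
    (h1 : ∀ i, ∑ j, ny j * (M j i : ℚ) = s')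
    (h2 : ∀ a, ∑ b, nx b * (N b a : ℚ) = s')
    (h3 : ∑ j, ny j - ∑ b, nx b = s') :
    ∑ i, Q i - ∑ a, q a = s :=
  stmt0_general m n s Q q M N hM hN ny nx s' hs' h1 h2 h3
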